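/- For every real number p > 1 there exists a constant C > 0, depending only on p, such that for all real numbers a ≥ 0 and b ≥ 0 one has |a^p − b^p − p·b^{p−1}·(a − b)| ≤ C·(b^{max{0, p−2}}·|a − b|^{min{p, 2}} + |a − b|^p). (When 1 < p < 2 the factor b^{max{0,p−2}} equals b^0 = 1.) -/
import Mathlib

open Real

private lemma aux_rpow_sub_le_sub_rpow {x y q : ℝ} (hy : 0 ≤ y) (hxy : y ≤ x)
    (hq0 : 0 ≤ q) (hq1 : q ≤ 1) : x ^ q - y ^ q ≤ (x - y) ^ q := by
  have hu : 0 ≤ x - y := sub_nonneg.2 hxy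
  have h := NNReal.rpow_add_le_add_rpow (x - y).toNNReal y.toNNReal hq0 hq1
  have h2 := NNReal.coe_le_coe.2 h
  push_cast [NNReal.coe_rpow] at h2
  rw [Real.coe_toNNReal _ hu, Real.coe_toNNReal _ hy, sub_add_cancel] at h2
  linarith

private lemma aux_sub_rpow_le {x y q : ℝ} (hy : 0 ≤ y) (hxy : y ≤ x) (hq : 1 ≤ q) :
    x ^ q - y ^ q ≤ q * x ^ (q - 1) * (x - y) := by
  rcases eq_or_lt_of_le (hy.trans hxy) with h0 | hx
  · have hx0 : x = 0 := h0.symm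
    have hy0 : y = 0 := le_antisymm (hx0 ▸ hxy) hy
    subst hx0; subst hy0
    simp
  · have hs : -1 ≤ y / x - 1 := by
      have : 0 ≤ y / x := div_nonneg hy hx.le
      linarith
    have hb := one_add_mul_self_le_rpow_one_add hs hq
    rw [add_sub_cancel] at hb
    have hxq : 0 < x ^ q := Real.rpow_pos_of_pos hx q
    have h2 : (y / x) ^ q = y ^ q / x ^ q := Real.div_rpow hy hx.le q
    have h1 := mul_le_mul_of_nonneg_right hb hxq.le
    rw [h2, div_mul_cancel₀ _ hxq.ne'] at h1
    have hxq1 : x ^ q = x ^ (q - 1) * x := by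
      rw [← Real.rpow_add_one hx.ne' (q - 1), sub_add_cancel]
    have e : (1 + q * (y / x - 1)) * x ^ q = x ^ q + q * (y - x) * x ^ (q - 1) := by
      rw [hxq1]; field_simp
    rw [e] at h1
    nlinarith [h1]

private lemma aux_mvt_rpow {p a b : ℝ} (hp : 1 ≤ p) (hab : a < b) :
    ∃ ξ ∈ Set.Ioo a b, b ^ p - a ^ p = p * ξ ^ (p - 1) * (b - a) := by
  have hcont : ContinuousOn (fun x : ℝ => x ^ p) (Set.Icc a b) := fun x _ =>
    (Real.continuousAt_rpow_const x p (Or.inr (by linarith))).continuousWithinAt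
  have hderiv : ∀ x ∈ Set.Ioo a b, HasDerivAt (fun x : ℝ => x ^ p) (p * x ^ (p - 1)) x :=
    fun x _ => Real.hasDerivAt_rpow_const (Or.inr hp)
  obtain ⟨ξ, hξ, hslope⟩ := exists_hasDerivAt_eq_slope (fun x => x ^ p)
    (fun x => p * x ^ (p - 1)) hab hcont hderiv
  refine ⟨ξ, hξ, ?_⟩
  rw [eq_div_iff (by linarith : b - a ≠ 0)] at hslope
  linarith

theorem pointwise_estimate_2 (p : ℝ) (hp : 1 < p) :
    ∃ C : ℝ, 0 < C ∧ ∀ a b : ℝ, 0 ≤ a → 0 ≤ b →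
      |a ^ p - b ^ p - p * b ^ (p - 1) * (a - b)| ≤
        C * (b ^ (max 0 (p - 2)) * |a - b| ^ (min p 2) + |a - b| ^ p) := by
  rcases le_total p 2 with hp2 | hp2
  · -- case 1 < p ≤ 2
    have hmax : max 0 (p - 2) = 0 := max_eq_left (by linarith)
    have hmin : min p 2 = p := min_eq_left hp2
    refine ⟨p, by linarith, fun a b ha hb => ?_⟩
    simp only [hmax, hmin, Real.rpow_zero, one_mul]
    rcases eq_or_ne a b with rfl | hab
    · have hpne : p ≠ 0 := by intro h; rw [h] at hp; norm_num at hp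
      simp [Real.zero_rpow hpne]
    -- MVT
    have key : ∃ ξ : ℝ, 0 ≤ ξ ∧ |ξ - b| ≤ |a - b| ∧
        a ^ p - b ^ p = p * ξ ^ (p - 1) * (a - b) := by
      rcases lt_or_gt_of_ne hab with h | h
      · obtain ⟨ξ, hm, he⟩ := aux_mvt_rpow hp.le h
        refine ⟨ξ, ha.trans hm.1.le, ?_, by linarith⟩
        rw [abs_of_nonpos (by linarith [hm.2] : ξ - b ≤ 0),
          abs_of_nonpos (by linarith : a - b ≤ 0)]
        linarith [hm.1]
      · obtain ⟨ξ, hm, he⟩ := aux_mvt_rpow hp.le h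
        refine ⟨ξ, hb.trans hm.1.le, ?_, by linarith⟩
        rw [abs_of_nonneg (by linarith [hm.1] : (0:ℝ) ≤ ξ - b),
          abs_of_nonneg (by linarith : (0:ℝ) ≤ a - b)]
        linarith [hm.2]
    obtain ⟨ξ, hξ0, hξb, he⟩ := key
    have hD : 0 < |a - b| := abs_pos.2 (sub_ne_zero.2 hab)
    have habs : |ξ ^ (p - 1) - b ^ (p - 1)| ≤ |ξ - b| ^ (p - 1) := by
      rcases le_total ξ b with h | h
      · rw [abs_sub_comm,
          abs_of_nonneg (sub_nonneg.2 (Real.rpow_le_rpow hξ0 h (by linarith))),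
          abs_of_nonpos (by linarith : ξ - b ≤ 0), neg_sub]
        exact aux_rpow_sub_le_sub_rpow hξ0 h (by linarith) (by linarith)
      · rw [abs_of_nonneg (sub_nonneg.2 (Real.rpow_le_rpow hb h (by linarith))),
          abs_of_nonneg (by linarith : (0:ℝ) ≤ ξ - b)]
        exact aux_rpow_sub_le_sub_rpow hb h (by linarith) (by linarith)
    have habs2 : |ξ - b| ^ (p - 1) ≤ |a - b| ^ (p - 1) :=
      Real.rpow_le_rpow (abs_nonneg _) hξb (by linarith)
    have hEq : a ^ p - b ^ p - p * b ^ (p - 1) * (a - b)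
        = p * (a - b) * (ξ ^ (p - 1) - b ^ (p - 1)) := by rw [he]; ring
    rw [hEq, abs_mul, abs_mul, abs_of_nonneg (by linarith : (0:ℝ) ≤ p)]
    have hsplit : |a - b| ^ p = |a - b| * |a - b| ^ (p - 1) := by
      rw [← Real.rpow_one_add' (abs_nonneg _) (by linarith)]
      ring_nf
    have h1 : p * |a - b| * |ξ ^ (p - 1) - b ^ (p - 1)| ≤ p * |a - b| * |a - b| ^ (p - 1) := by
      exact mul_le_mul_of_nonneg_left (habs.trans habs2)
        (mul_nonneg (by linarith) (abs_nonneg _))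
    rw [hsplit]
    nlinarith [Real.rpow_nonneg (abs_nonneg (a - b)) (p - 1), hD.le,
      mul_nonneg hD.le (Real.rpow_nonneg (abs_nonneg (a - b)) (p - 1))]
  · -- case p ≥ 2
    have hmax : max 0 (p - 2) = p - 2 := max_eq_right (by linarith)
    have hmin : min p 2 = 2 := min_eq_right hp2
    refine ⟨p * (p - 1) * 2 ^ (p - 2), mul_pos (mul_pos (by linarith) (by linarith))
      (Real.rpow_pos_of_pos (by norm_num) _), fun a b ha hb => ?_⟩
    simp only [hmax, hmin]
    rcases eq_or_ne a b with rfl | hab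
    · have hpne : p ≠ 0 := by intro h; rw [h] at hp; norm_num at hp
      simp [Real.zero_rpow hpne]
    have key : ∃ ξ : ℝ, 0 ≤ ξ ∧ |ξ - b| ≤ |a - b| ∧ ξ ≤ b + |a - b| ∧
        a ^ p - b ^ p = p * ξ ^ (p - 1) * (a - b) := by
      rcases lt_or_gt_of_ne hab with h | h
      · obtain ⟨ξ, hm, he⟩ := aux_mvt_rpow hp.le h
        have hd : |a - b| = b - a := by
          rw [abs_of_nonpos (by linarith : a - b ≤ 0)]; ring
        refine ⟨ξ, ha.trans hm.1.le, ?_, by rw [hd]; linarith [hm.2], by linarith⟩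
        rw [abs_of_nonpos (by linarith [hm.2] : ξ - b ≤ 0), hd]
        linarith [hm.1]
      · obtain ⟨ξ, hm, he⟩ := aux_mvt_rpow hp.le h
        have hd : |a - b| = a - b := abs_of_nonneg (by linarith)
        refine ⟨ξ, hb.trans hm.1.le, ?_, by rw [hd]; linarith [hm.2], by linarith⟩
        rw [abs_of_nonneg (by linarith [hm.1] : (0:ℝ) ≤ ξ - b), hd]
        linarith [hm.2]
    obtain ⟨ξ, hξ0, hξb, hξup, he⟩ := key
    set D := |a - b| with hDdef
    have hD : 0 < D := abs_pos.2 (sub_ne_zero.2 hab)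
    -- bound |ξ^{p-1} - b^{p-1}| ≤ (p-1) * (b + D)^{p-2} * D
    have hstep : |ξ ^ (p - 1) - b ^ (p - 1)| ≤ (p - 1) * (b + D) ^ (p - 2) * D := by
      have hbd : b ≤ b + D := by linarith
      have hBDnn : (0:ℝ) ≤ b + D := by linarith
      rcases le_total ξ b with h | h
      · rw [abs_sub_comm,
          abs_of_nonneg (sub_nonneg.2 (Real.rpow_le_rpow hξ0 h (by linarith)))]
        have h1 := aux_sub_rpow_le hξ0 h (by linarith : (1:ℝ) ≤ p - 1)
        have h2 : b ^ (p - 1 - 1) ≤ (b + D) ^ (p - 2) := by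
          rw [show p - 1 - 1 = p - 2 by ring]
          exact Real.rpow_le_rpow hb hbd (by linarith)
        have h3 : b - ξ ≤ D := by
          calc b - ξ = |ξ - b| := by rw [abs_of_nonpos (by linarith : ξ - b ≤ 0)]; ring
            _ ≤ D := hξb
        calc b ^ (p - 1) - ξ ^ (p - 1) ≤ (p - 1) * b ^ (p - 1 - 1) * (b - ξ) := h1
          _ ≤ (p - 1) * (b + D) ^ (p - 2) * D := by
              exact mul_le_mul (mul_le_mul_of_nonneg_left h2 (by linarith)) h3
                (by linarith) (mul_nonneg (by linarith) (Real.rpow_nonneg hBDnn _))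
      · rw [abs_of_nonneg (sub_nonneg.2 (Real.rpow_le_rpow hb h (by linarith)))]
        have h1 := aux_sub_rpow_le hb h (by linarith : (1:ℝ) ≤ p - 1)
        have h2 : ξ ^ (p - 1 - 1) ≤ (b + D) ^ (p - 2) := by
          rw [show p - 1 - 1 = p - 2 by ring]
          exact Real.rpow_le_rpow hξ0 hξup (by linarith)
        have h3 : ξ - b ≤ D := by
          rw [← abs_of_nonneg (by linarith : (0:ℝ) ≤ ξ - b)]
          exact hξb
        calc ξ ^ (p - 1) - b ^ (p - 1) ≤ (p - 1) * ξ ^ (p - 1 - 1) * (ξ - b) := h1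
          _ ≤ (p - 1) * (b + D) ^ (p - 2) * D := by
              exact mul_le_mul (mul_le_mul_of_nonneg_left h2 (by linarith)) h3
                (by linarith) (mul_nonneg (by linarith) (Real.rpow_nonneg hBDnn _))
    -- (b + D)^{p-2} ≤ 2^{p-2} (b^{p-2} + D^{p-2})
    have hsplit : (b + D) ^ (p - 2) ≤ 2 ^ (p - 2) * (b ^ (p - 2) + D ^ (p - 2)) := by
      have hm : (b + D) ^ (p - 2) ≤ (2 * max b D) ^ (p - 2) := by
        apply Real.rpow_le_rpow (by linarith)
        · rcases le_total b D with h | h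
          · rw [max_eq_right h]; linarith
          · rw [max_eq_left h]; linarith
        · linarith
      have h2 : (2 * max b D) ^ (p - 2) = 2 ^ (p - 2) * (max b D) ^ (p - 2) :=
        Real.mul_rpow (by norm_num) (le_max_of_le_left hb)
      have h3 : (max b D) ^ (p - 2) ≤ b ^ (p - 2) + D ^ (p - 2) := by
        rcases le_total b D with h | h
        · rw [max_eq_right h]
          nlinarith [Real.rpow_nonneg hb (p - 2)]
        · rw [max_eq_left h]
          nlinarith [Real.rpow_nonneg hD.le (p - 2)]
      calc (b + D) ^ (p - 2) ≤ (2 * max b D) ^ (p - 2) := hm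
        _ = 2 ^ (p - 2) * (max b D) ^ (p - 2) := h2
        _ ≤ 2 ^ (p - 2) * (b ^ (p - 2) + D ^ (p - 2)) := by
            apply mul_le_mul_of_nonneg_left h3 (by positivity)
    have hEq : a ^ p - b ^ p - p * b ^ (p - 1) * (a - b)
        = p * (a - b) * (ξ ^ (p - 1) - b ^ (p - 1)) := by rw [he]; ring
    rw [hEq, abs_mul, abs_mul, abs_of_nonneg (by linarith : (0:ℝ) ≤ p)]
    have hD2 : D ^ (2:ℝ) = D * D := by
      rw [show (2:ℝ) = ((2:ℕ):ℝ) by norm_num, Real.rpow_natCast]; ring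
    have hDp : D ^ p = D ^ (p - 2) * (D * D) := by
      rw [← hD2, ← Real.rpow_add hD]; ring_nf
    have hb2 : (0:ℝ) ≤ b ^ (p - 2) := Real.rpow_nonneg hb _
    have hd2 : (0:ℝ) ≤ D ^ (p - 2) := Real.rpow_nonneg hD.le _
    have h2p : (0:ℝ) < 2 ^ (p - 2) := Real.rpow_pos_of_pos (by norm_num) _
    calc p * D * |ξ ^ (p - 1) - b ^ (p - 1)|
        ≤ p * D * ((p - 1) * (b + D) ^ (p - 2) * D) := by
          apply mul_le_mul_of_nonneg_left hstep (by positivity)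
      _ ≤ p * D * ((p - 1) * (2 ^ (p - 2) * (b ^ (p - 2) + D ^ (p - 2))) * D) := by
          apply mul_le_mul_of_nonneg_left _ (by positivity)
          apply mul_le_mul_of_nonneg_right
            (mul_le_mul_of_nonneg_left hsplit (by linarith)) hD.le
      _ = p * (p - 1) * 2 ^ (p - 2) * (b ^ (p - 2) * (D * D) + D ^ (p - 2) * (D * D)) := by
          ring
      _ = p * (p - 1) * 2 ^ (p - 2) * (b ^ (p - 2) * D ^ (2:ℝ) + D ^ p) := by
          rw [hD2, hDp]
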